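/- Every n-Hausdorff space can be densely embedded in an n-H-closed space. -/

import Mathlib

open Set Topology Function

universe u v

/-- A space is `n`-Hausdorff if any `n` distinct points admit open neighborhoods
with empty intersection. -/
def NHausdorff (X : Type u) [TopologicalSpace X] (n : ℕ) : Prop :=
  ∀ x : Fin n → X, Function.Injective x →
    ∃ U : Fin n → Set X, (∀ i, IsOpen (U i) ∧ x i ∈ U i) ∧ (⋂ i, U i) = (∅ : Set X)

/-- An open filter on `X`: a nonempty family of nonempty open sets closed under
finite intersections and open supersets. -/
structure IsOpenFilter {X : Type u} [TopologicalSpace X] (F : Set (Set X)) : Prop where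
  nonempty : F.Nonempty
  isOpen_mem : ∀ U ∈ F, IsOpen U
  nonempty_mem : ∀ U ∈ F, U.Nonempty
  inter_mem : ∀ U ∈ F, ∀ V ∈ F, U ∩ V ∈ F
  superset_mem : ∀ U ∈ F, ∀ V : Set X, IsOpen V → U ⊆ V → V ∈ F

/-- An open ultrafilter: a maximal open filter. -/
def IsOpenUltrafilter {X : Type u} [TopologicalSpace X] (F : Set (Set X)) : Prop :=
  IsOpenFilter F ∧ ∀ G : Set (Set X), IsOpenFilter G → F ⊆ G → G = F

/-- The adherence of a family of sets: `⋂ {cl U : U ∈ F}`. -/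
def adh {X : Type u} [TopologicalSpace X] (F : Set (Set X)) : Set X :=
  ⋂ U ∈ F, closure U

/-- `X` is `n`-H-closed: `X` is `n`-Hausdorff and closed in every `n`-Hausdorff space
in which it embeds. -/
def NHClosed (X : Type u) [TopologicalSpace X] (n : ℕ) : Prop :=
  NHausdorff X n ∧
    ∀ (Z : Type u) (_ : TopologicalSpace Z) (e : X → Z),
      NHausdorff Z n → IsEmbedding e → IsClosed (Set.range e)

/-! Adjoin to `X`, for each open ultrafilter `U`, new points whose neighbourhoods are `{p} ∪ A`
with `A ∈ U`, as many as needed for `U` to have exactly `n - 1` limit points: those of `aU`, of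
which there are fewer than `n` because `X` is `n`-Hausdorff, and the new ones. No `n` distinct
points are limits of one open ultrafilter, and this is what separates two of any `n` given points,
so the extension is `n`-Hausdorff. If it were not closed in an `n`-Hausdorff space `Z`, the
neighbourhood traces of a boundary point `z` would extend to an open ultrafilter `U` on `X`; but
every neighbourhood of `z` and of the `n - 1` limit points of `U` traces to a member of `U`, so
these `n` points cannot be separated. -/

section OpenFilter

variable {X : Type u} [TopologicalSpace X] {F U : Set (Set X)}

theorem IsOpenFilter.univ_mem (hF : IsOpenFilter F) : univ ∈ F :=
  let ⟨A, hA⟩ := hF.nonempty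
  hF.superset_mem A hA univ isOpen_univ (subset_univ A)

theorem IsOpenFilter.iInter_mem {ι : Type v} [Finite ι] (hF : IsOpenFilter F) {A : ι → Set X}
    (hA : ∀ i, A i ∈ F) : (⋂ i, A i) ∈ F := by
  classical
  cases nonempty_fintype ι
  have key : ∀ s : Finset ι, (⋂ i ∈ s, A i) ∈ F := by
    intro s
    induction s using Finset.induction with
    | empty => simpa using hF.univ_mem
    | insert i s _ ih =>
      rw [Finset.set_biInter_insert]
      exact hF.inter_mem _ (hA i) _ ih
  simpa using key Finset.univ

theorem IsOpenFilter.sUnion_of_isChain {c : Set (Set (Set X))} (hc : ∀ G ∈ c, IsOpenFilter G)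
    (hchain : IsChain (· ⊆ ·) c) (hne : c.Nonempty) : IsOpenFilter (⋃₀ c) := by
  obtain ⟨G₀, hG₀⟩ := hne
  refine ⟨?_, ?_, ?_, ?_, ?_⟩
  · obtain ⟨A, hA⟩ := (hc G₀ hG₀).nonempty
    exact ⟨A, G₀, hG₀, hA⟩
  · rintro A ⟨G, hG, hAG⟩
    exact (hc G hG).isOpen_mem A hAG
  · rintro A ⟨G, hG, hAG⟩
    exact (hc G hG).nonempty_mem A hAG
  · rintro A ⟨G, hG, hAG⟩ B ⟨G', hG', hBG'⟩
    rcases hchain.total hG hG' with h | h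
    · exact ⟨G', hG', (hc G' hG').inter_mem A (h hAG) B hBG'⟩
    · exact ⟨G, hG, (hc G hG).inter_mem A hAG B (h hBG')⟩
  · rintro A ⟨G, hG, hAG⟩ B hB hAB
    exact ⟨G, hG, (hc G hG).superset_mem A hAG B hB hAB⟩

theorem IsOpenFilter.exists_isOpenUltrafilter_superset (hF : IsOpenFilter F) :
    ∃ U, IsOpenUltrafilter U ∧ F ⊆ U := by
  obtain ⟨U, hFU, hU⟩ := zorn_subset_nonempty {G | IsOpenFilter G ∧ F ⊆ G}
    (fun c hcS hchain hne => ⟨⋃₀ c,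
      ⟨IsOpenFilter.sUnion_of_isChain (fun G hG => (hcS hG).1) hchain hne,
        let ⟨G₀, hG₀⟩ := hne; (hcS hG₀).2.trans (subset_sUnion_of_mem hG₀)⟩,
      fun _ => subset_sUnion_of_mem⟩) F ⟨hF, subset_rfl⟩
  exact ⟨U, ⟨hU.prop.1, fun G hG hUG => (hU.eq_of_subset ⟨hG, hFU.trans hUG⟩ hUG).symm⟩, hFU⟩

theorem exists_isOpenUltrafilter_of_mem_closure_range {Z : Type v} [TopologicalSpace Z]
    {f : X → Z} (hf : Continuous f) {z : Z} (hz : z ∈ closure (range f)) :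
    ∃ U, IsOpenUltrafilter U ∧ ∀ W, IsOpen W → z ∈ W → f ⁻¹' W ∈ U := by
  let F : Set (Set X) := {A | IsOpen A ∧ ∃ W, IsOpen W ∧ z ∈ W ∧ f ⁻¹' W ⊆ A}
  have hF : IsOpenFilter F := by
    refine ⟨⟨univ, isOpen_univ, univ, isOpen_univ, mem_univ z, subset_univ _⟩, fun A hA => hA.1,
      ?_, ?_, ?_⟩
    · rintro A ⟨-, W, hW, hzW, hWA⟩
      obtain ⟨-, hwW, x, rfl⟩ := mem_closure_iff.1 hz W hW hzW
      exact ⟨x, hWA hwW⟩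
    · rintro A ⟨hA, W, hW, hzW, hWA⟩ B ⟨hB, W', hW', hzW', hWB⟩
      exact ⟨hA.inter hB, W ∩ W', hW.inter hW', ⟨hzW, hzW'⟩, inter_subset_inter hWA hWB⟩
    · rintro A ⟨-, W, hW, hzW, hWA⟩ B hB hAB
      exact ⟨hB, W, hW, hzW, hWA.trans hAB⟩
  obtain ⟨U, hU, hFU⟩ := hF.exists_isOpenUltrafilter_superset
  exact ⟨U, hU, fun W hW hzW => hFU ⟨hW.preimage hf, W, hW, hzW, subset_rfl⟩⟩

theorem IsOpenUltrafilter.mem_of_forall_inter_nonempty (hU : IsOpenUltrafilter U) {V : Set X}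
    (hV : IsOpen V) (h : ∀ A ∈ U, (A ∩ V).Nonempty) : V ∈ U := by
  obtain ⟨A₀, hA₀⟩ := hU.1.nonempty
  let G : Set (Set X) := {W | IsOpen W ∧ ∃ A ∈ U, A ∩ V ⊆ W}
  have hG : IsOpenFilter G := by
    refine ⟨⟨V, hV, A₀, hA₀, inter_subset_right⟩, fun W hW => hW.1, ?_, ?_, ?_⟩
    · rintro W ⟨-, A, hA, hAW⟩
      exact (h A hA).mono hAW
    · rintro W ⟨hW, A, hA, hAW⟩ W' ⟨hW', A', hA', hAW'⟩
      refine ⟨hW.inter hW', A ∩ A', hU.1.inter_mem A hA A' hA', fun x hx => ?_⟩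
      exact ⟨hAW ⟨hx.1.1, hx.2⟩, hAW' ⟨hx.1.2, hx.2⟩⟩
    · rintro W ⟨-, A, hA, hAW⟩ W' hW' hWW'
      exact ⟨hW', A, hA, hAW.trans hWW'⟩
  rw [← hU.2 G hG fun A hA => ⟨hU.1.isOpen_mem A hA, A, hA, inter_subset_left⟩]
  exact ⟨hV, A₀, hA₀, inter_subset_right⟩

theorem IsOpenUltrafilter.exists_disjoint_of_notMem (hU : IsOpenUltrafilter U) {V : Set X}
    (hV : IsOpen V) (hVU : V ∉ U) : ∃ A ∈ U, Disjoint A V := by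
  by_contra! h
  exact hVU (hU.mem_of_forall_inter_nonempty hV fun A hA =>
    not_disjoint_iff_nonempty_inter.1 (h A hA))

theorem IsOpenUltrafilter.mem_adh_iff (hU : IsOpenUltrafilter U) {x : X} :
    x ∈ adh U ↔ ∀ V, IsOpen V → x ∈ V → V ∈ U := by
  simp only [adh, mem_iInter₂, mem_closure_iff]
  refine ⟨fun h V hV hxV => hU.mem_of_forall_inter_nonempty hV fun A hA => ?_,
    fun h A hA V hV hxV => hU.1.nonempty_mem _ (hU.1.inter_mem V (h V hV hxV) A hA)⟩
  rw [inter_comm]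
  exact h A hA V hV hxV

end OpenFilter

section NHausdorff

variable {X : Type u} [TopologicalSpace X] {n : ℕ}

theorem NHausdorff.exists_of_ncard_eq (hX : NHausdorff X n) {s : Set X} (hs : s.Finite)
    (hsn : s.ncard = n) :
    ∃ V : s → Set X, (∀ x, IsOpen (V x) ∧ ↑x ∈ V x) ∧ (⋂ x, V x) = ∅ := by
  have := hs.to_subtype
  let e : s ≃ Fin n := Finite.equivFinOfCardEq ((Nat.card_coe_set_eq s).trans hsn)
  obtain ⟨V, hV, hVe⟩ := hX (Subtype.val ∘ e.symm) (Subtype.val_injective.comp e.symm.injective)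
  refine ⟨V ∘ e, fun x => by simpa using hV (e x), ?_⟩
  rw [← hVe]
  exact e.surjective.iInter_comp V

theorem NHausdorff.encard_adh_lt (hX : NHausdorff X n) {U : Set (Set X)}
    (hU : IsOpenUltrafilter U) : (adh U).encard < n := by
  by_contra! h
  obtain ⟨t, hts, htn⟩ := exists_subset_encard_eq h
  have ht : t.Finite := finite_of_encard_eq_coe htn
  obtain ⟨V, hV, hVe⟩ := hX.exists_of_ncard_eq ht (by
    rw [← Nat.cast_inj (R := ℕ∞), ht.cast_ncard_eq, htn])
  have := ht.to_subtype
  have hmem : (⋂ x, V x) ∈ U := hU.1.iInter_mem fun x =>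
    hU.mem_adh_iff.1 (hts x.2) (V x) (hV x).1 (hV x).2
  simpa [hVe] using hU.1.nonempty_mem _ hmem

theorem NHausdorff.finite_adh (hX : NHausdorff X n) {U : Set (Set X)} (hU : IsOpenUltrafilter U) :
    (adh U).Finite :=
  encard_lt_top_iff.1 ((hX.encard_adh_lt hU).trans (ENat.natCast_lt_top n))

theorem NHausdorff.ncard_adh_lt (hX : NHausdorff X n) {U : Set (Set X)}
    (hU : IsOpenUltrafilter U) : (adh U).ncard < n := by
  have h := hX.encard_adh_lt hU
  rw [← (hX.finite_adh hU).cast_ncard_eq] at h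
  exact_mod_cast h

theorem exists_iInter_eq_empty_of_disjoint {ι : Type*} {Y : Type v} [TopologicalSpace Y]
    (y : ι → Y) (i j : ι) {A B : Set Y} (hA : IsOpen A) (hB : IsOpen B) (hyA : y i ∈ A)
    (hyB : y j ∈ B) (hAB : Disjoint A B) :
    ∃ W : ι → Set Y, (∀ l, IsOpen (W l) ∧ y l ∈ W l) ∧ (⋂ l, W l) = ∅ := by
  classical
  refine ⟨fun l => (if l = i then A else univ) ∩ (if l = j then B else univ), fun l => ⟨?_, ?_⟩, ?_⟩
  · exact IsOpen.inter (by split_ifs <;> simp [hA]) (by split_ifs <;> simp [hB])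
  · simp only [mem_inter_iff, mem_ite_univ_right]
    exact ⟨fun h => h ▸ hyA, fun h => h ▸ hyB⟩
  · refine eq_empty_of_forall_notMem fun x hx => hAB.notMem_of_mem_left (a := x) ?_ ?_
    · simpa using (mem_iInter.1 hx i).1
    · simpa using (mem_iInter.1 hx j).2

end NHausdorff

def KatetovExt.NewPoint (X : Type u) [TopologicalSpace X] (n : ℕ) : Type u :=
  Σ U : {U : Set (Set X) // IsOpenUltrafilter U}, Fin (n - 1 - (adh U.1).ncard)

abbrev KatetovExt (X : Type u) [TopologicalSpace X] (n : ℕ) : Type u :=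
  X ⊕ KatetovExt.NewPoint X n

namespace KatetovExt

variable {X : Type u} [TopologicalSpace X] {n : ℕ}

instance : TopologicalSpace (KatetovExt X n) where
  IsOpen W := IsOpen (Sum.inl ⁻¹' W) ∧ ∀ p, Sum.inr p ∈ W → Sum.inl ⁻¹' W ∈ p.1.1
  isOpen_univ := ⟨isOpen_univ, fun p _ => p.1.2.1.univ_mem⟩
  isOpen_inter W W' hW hW' :=
    ⟨hW.1.inter hW'.1, fun p hp => p.1.2.1.inter_mem _ (hW.2 p hp.1) _ (hW'.2 p hp.2)⟩
  isOpen_sUnion S hS := by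
    have hpre : IsOpen (Sum.inl ⁻¹' ⋃₀ S : Set X) := by
      rw [preimage_sUnion]
      exact isOpen_biUnion fun W hW => (hS W hW).1
    refine ⟨hpre, fun p ⟨W, hWS, hpW⟩ => ?_⟩
    exact p.1.2.1.superset_mem _ ((hS W hWS).2 p hpW) _ hpre
      (preimage_mono (subset_sUnion_of_mem hWS))

theorem isOpen_inl_image {V : Set X} (hV : IsOpen V) :
    IsOpen (Sum.inl '' V : Set (KatetovExt X n)) := by
  refine ⟨by rwa [preimage_image_eq V Sum.inl_injective], fun p ⟨x, _, hx⟩ => ?_⟩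
  exact absurd hx Sum.inl_ne_inr

@[simp]
theorem preimage_inl_insert_inr (p : NewPoint X n) (A : Set X) :
    Sum.inl ⁻¹' (insert (Sum.inr p) (Sum.inl '' A) : Set (KatetovExt X n)) = A := by
  ext x
  simp

theorem isOpen_insert_inr {p : NewPoint X n} {A : Set X} (hA : A ∈ p.1.1) :
    IsOpen (insert (Sum.inr p) (Sum.inl '' A) : Set (KatetovExt X n)) := by
  have hpre := preimage_inl_insert_inr p A
  refine ⟨by rw [hpre]; exact p.1.2.1.isOpen_mem A hA, fun q hq => ?_⟩
  rcases hq with hq | ⟨x, -, hx⟩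
  · cases Sum.inr_injective hq
    rwa [hpre]
  · exact absurd hx Sum.inl_ne_inr

theorem isOpenEmbedding_inl : IsOpenEmbedding (Sum.inl : X → KatetovExt X n) :=
  .of_continuous_injective_isOpenMap (continuous_def.2 fun _ hW => hW.1) Sum.inl_injective
    fun _ => isOpen_inl_image

theorem denseRange_inl : DenseRange (Sum.inl : X → KatetovExt X n) := by
  refine dense_iff_inter_open.2 fun W hW ⟨w, hw⟩ => ?_
  rcases w with x | p
  · exact ⟨Sum.inl x, hw, x, rfl⟩
  · obtain ⟨x, hx⟩ := p.1.2.1.nonempty_mem _ (hW.2 p hw)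
    exact ⟨Sum.inl x, hx, x, rfl⟩

variable (n) in
def limPoints (U : Set (Set X)) : Set (KatetovExt X n) :=
  {y | ∀ W, IsOpen W → y ∈ W → Sum.inl ⁻¹' W ∈ U}

theorem inr_mem_limPoints (p : NewPoint X n) : Sum.inr p ∈ limPoints n p.1.1 :=
  fun _ hW hpW => hW.2 p hpW

theorem limPoints_eq {U : Set (Set X)} (hU : IsOpenUltrafilter U) :
    limPoints n U = Sum.inl '' adh U ∪ range fun j => Sum.inr ⟨⟨U, hU⟩, j⟩ := by
  ext (x | p)
  · simp only [mem_union, Sum.inl_injective.mem_set_image, mem_range, reduceCtorEq,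
      exists_false, or_false, hU.mem_adh_iff]
    refine ⟨fun hx V hV hxV => ?_, fun hx W hW hxW => hx _ hW.1 hxW⟩
    simpa [preimage_image_eq V Sum.inl_injective] using hx _ (isOpen_inl_image hV) ⟨x, hxV, rfl⟩
  · simp only [mem_union, mem_image, reduceCtorEq, and_false, exists_false, false_or, mem_range]
    refine ⟨fun hp => ?_, ?_⟩
    · have hpU : p.1.1 ⊆ U := fun A hA => by
        simpa using hp _ (isOpen_insert_inr hA) (mem_insert _ _)
      obtain ⟨⟨V, hV⟩, j⟩ := p
      obtain rfl := hV.2 U hU.1 hpU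
      exact ⟨j, rfl⟩
    · rintro ⟨j, hj⟩
      cases Sum.inr_injective hj
      exact inr_mem_limPoints _

theorem finite_limPoints (hX : NHausdorff X n) {U : Set (Set X)} (hU : IsOpenUltrafilter U) :
    (limPoints n U).Finite := by
  rw [limPoints_eq hU]
  exact ((hX.finite_adh hU).image _).union (finite_range _)

theorem ncard_limPoints_add_one (hX : NHausdorff X n) {U : Set (Set X)}
    (hU : IsOpenUltrafilter U) : (limPoints n U).ncard + 1 = n := by
  have hdisj : Disjoint (Sum.inl '' adh U : Set (KatetovExt X n))
      (range fun j => Sum.inr ⟨⟨U, hU⟩, j⟩) :=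
    disjoint_left.2 fun _ ⟨_, _, hx⟩ ⟨_, hj⟩ => Sum.inl_ne_inr (hx.trans hj.symm)
  have hinj : Injective fun j => (Sum.inr ⟨⟨U, hU⟩, j⟩ : KatetovExt X n) :=
    fun _ _ h => eq_of_heq (Sigma.mk.inj (Sum.inr_injective h)).2
  rw [limPoints_eq hU, ncard_union_eq hdisj ((hX.finite_adh hU).image _) (finite_range _),
    ncard_image_of_injective _ Sum.inl_injective,
    ncard_range_of_injective hinj, Nat.card_fin]
  change (adh U).ncard + (n - 1 - (adh U).ncard) + 1 = n
  have := hX.ncard_adh_lt hU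
  omega

theorem nHausdorff (hn : n ≠ 0) (hX : NHausdorff X n) : NHausdorff (KatetovExt X n) n := by
  intro y hy
  by_cases hinl : ∀ i, ∃ x, y i = Sum.inl x
  · choose x hx using hinl
    obtain ⟨V, hV, hVe⟩ := hX x fun i j h => hy (by rw [hx i, hx j, h])
    have : NeZero n := ⟨hn⟩
    refine ⟨fun i => Sum.inl '' V i,
      fun i => ⟨isOpen_inl_image (hV i).1, hx i ▸ mem_image_of_mem _ (hV i).2⟩, ?_⟩
    rw [← Sum.inl_injective.injOn.image_iInter_eq, hVe, image_empty]
  obtain ⟨i, hi⟩ := not_forall.1 hinl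
  obtain ⟨p, hp⟩ : ∃ p, y i = Sum.inr p := by
    rcases hyi : y i with x | p
    · exact absurd ⟨x, hyi⟩ hi
    · exact ⟨p, rfl⟩
  obtain ⟨j, hj⟩ : ∃ j, y j ∉ limPoints n p.1.1 := by
    by_contra! h
    have hle := ncard_le_ncard (range_subset_iff.2 h) (finite_limPoints hX p.1.2)
    rw [ncard_range_of_injective hy, Nat.card_fin] at hle
    have := ncard_limPoints_add_one hX p.1.2
    omega
  obtain ⟨W, hW, hjW, hWp⟩ : ∃ W, IsOpen W ∧ y j ∈ W ∧ Sum.inl ⁻¹' W ∉ p.1.1 := by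
    simpa [limPoints] using hj
  obtain ⟨A, hA, hAW⟩ := p.1.2.exists_disjoint_of_notMem hW.1 hWp
  refine exists_iInter_eq_empty_of_disjoint y i j (isOpen_insert_inr hA) hW
    (hp ▸ mem_insert _ _) hjW ?_
  exact disjoint_insert_left.2 ⟨fun h => hWp (hW.2 p h), disjoint_image_left.2 hAW⟩

theorem isClosed_range (hX : NHausdorff X n) {Z : Type v} [TopologicalSpace Z]
    (hZ : NHausdorff Z n) {e : KatetovExt X n → Z} (hec : Continuous e) (hei : Injective e) :
    IsClosed (range e) := by
  refine isClosed_of_closure_subset fun z hz => ?_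
  by_contra hze
  have hzf : z ∈ closure (range (e ∘ Sum.inl)) := by
    rw [range_comp]
    exact closure_minimal (hec.range_subset_closure_image_dense denseRange_inl)
      isClosed_closure hz
  obtain ⟨U, hU, hzU⟩ := exists_isOpenUltrafilter_of_mem_closure_range
    (hec.comp isOpenEmbedding_inl.continuous) hzf
  have hL := finite_limPoints hX hU
  have hS : (insert z (e '' limPoints n U)).ncard = n := by
    rw [ncard_insert_of_notMem (fun h => hze (image_subset_range _ _ h)) (hL.image e),
      ncard_image_of_injective _ hei, ncard_limPoints_add_one hX hU]
  obtain ⟨V, hV, hVe⟩ := hZ.exists_of_ncard_eq ((hL.image e).insert z) hS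
  have hVU : ∀ s, (e ∘ Sum.inl) ⁻¹' V s ∈ U := by
    rintro ⟨s, rfl | ⟨y, hy, rfl⟩⟩
    · exact hzU _ (hV _).1 (hV _).2
    · exact hy _ ((hV _).1.preimage hec) (hV _).2
  have := ((hL.image e).insert z).to_subtype
  simpa [← preimage_iInter, hVe] using hU.1.nonempty_mem _ (hU.1.iInter_mem hVU)

end KatetovExt

theorem stmt15 {X : Type u} [TopologicalSpace X] (n : ℕ) (hn : 2 ≤ n)
    (hX : NHausdorff X n) :
    ∃ (Y : Type u) (_ : TopologicalSpace Y) (e : X → Y),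
      IsEmbedding e ∧ Dense (Set.range e) ∧ NHClosed Y n :=
  ⟨KatetovExt X n, inferInstance, Sum.inl, KatetovExt.isOpenEmbedding_inl.isEmbedding,
    KatetovExt.denseRange_inl, KatetovExt.nHausdorff (by omega) hX,
    fun _ _ _ hZ he => KatetovExt.isClosed_range hX hZ he.continuous he.injective⟩
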